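/- Let C = x_1 … x_m and D = y_1 … y_n be digraph cycles represented as pointed cycles by their orientation strings, let w ≥ 1 be an integer and i a vertex of D. There is a wind-w monotone homomorphism φ : C → D with φ(c_0) = i if and only if σ^i(D^w) ≤* C. -/

import Mathlib

open scoped Classical

namespace Recon

/-- Orientation letters for edges of a digraph cycle: `+`, `-`, `*`. -/
inductive Orient : Type
  | plus
  | minus
  | star
deriving DecidableEq

/-- A forward arc is allowed along an edge with this orientation letter. -/
def Orient.fwd : Orient → Prop
  | Orient.plus => True
  | Orient.minus => False
  | Orient.star => True

/-- A backward arc is allowed along an edge with this orientation letter. -/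
def Orient.bwd : Orient → Prop
  | Orient.plus => False
  | Orient.minus => True
  | Orient.star => True

/-- The arc relation of the reflexive digraph cycle on `ZMod m` whose orientation
string is `f`, where `f c` is the orientation of the edge from `c` to `c + 1`. -/
def cycRel {m : ℕ} (f : ZMod m → Orient) (u v : ZMod m) : Prop :=
  u = v ∨ (v = u + 1 ∧ (f u).fwd) ∨ (u = v + 1 ∧ (f v).bwd)

/-- `φ` is a digraph homomorphism. -/
def IsHom {α β : Type*} (rG : α → α → Prop) (rH : β → β → Prop) (φ : α → β) : Prop :=
  ∀ u v, rG u v → rH (φ u) (φ v)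

/-- The arc relation of the Hom-graph `Hom(G,H)`. -/
def HomArc {α β : Type*} (rG : α → α → Prop) (rH : β → β → Prop) (φ ψ : α → β) : Prop :=
  ∀ u v, rG u v → rH (φ u) (ψ v)

/-- `φψ` is an edge of the Hom-graph. -/
def HomEdge {α β : Type*} (rG : α → α → Prop) (rH : β → β → Prop) (φ ψ : α → β) : Prop :=
  HomArc rG rH φ ψ ∨ HomArc rG rH ψ φ

/-- The contribution of the edge `c (c+1)` of `C` to the increase of `φ`:
`1` if increasing, `-1` if decreasing, `0` if stationary. -/
def edgeVal {m n : ℕ} (φ : ZMod m → ZMod n) (c : ZMod m) : ℤ :=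
  if φ (c + 1) = φ c + 1 then 1 else if φ (c + 1) = φ c - 1 then -1 else 0

/-- The increase of a map between cycles: #increasing − #decreasing edges. -/
def increase {m n : ℕ} (φ : ZMod m → ZMod n) : ℤ :=
  ∑ j ∈ Finset.range m, edgeVal φ ((j : ℕ) : ZMod m)

/-- The increase of the subpath `c_a … c_{a+L}`. -/
def partialInc {m n : ℕ} (φ : ZMod m → ZMod n) (a : ZMod m) (L : ℕ) : ℤ :=
  ∑ j ∈ Finset.range L, edgeVal φ (a + ((j : ℕ) : ZMod m))

/-- `φ` has wind `w`, i.e. its increase is `w * n`. -/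
def HasWind {m n : ℕ} (φ : ZMod m → ZMod n) (w : ℤ) : Prop :=
  increase φ = w * (n : ℤ)

/-- A reflexive digraph cycle is non-contractible if it has length at least 4
or is a directed 3-cycle. -/
def NonContractible {n : ℕ} (f : ZMod n → Orient) : Prop :=
  4 ≤ n ∨ (n = 3 ∧ ((∀ i, f i = Orient.plus) ∨ (∀ i, f i = Orient.minus)))

/-- `φ` is increasing: every edge increasing or stationary, not all stationary. -/
def IncMap {m n : ℕ} (φ : ZMod m → ZMod n) : Prop :=
  (∀ c, φ (c + 1) = φ c + 1 ∨ φ (c + 1) = φ c) ∧ ∃ c, φ (c + 1) = φ c + 1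

/-- `φ` is decreasing: every edge decreasing. -/
def DecMap {m n : ℕ} (φ : ZMod m → ZMod n) : Prop :=
  ∀ c, φ (c + 1) = φ c - 1

/-- `φ` is monotone: increasing or decreasing. -/
def MonMap {m n : ℕ} (φ : ZMod m → ZMod n) : Prop :=
  IncMap φ ∨ DecMap φ

/-- `φ` is monotone in the weak sense where constant maps also count. -/
def MonOrConst {m n : ℕ} (φ : ZMod m → ZMod n) : Prop :=
  (∀ c, φ (c + 1) = φ c + 1 ∨ φ (c + 1) = φ c) ∨ DecMap φ

/-- `Y ≤* X`: `Y` is a `*`-substring of `X`, via a strictly increasing selection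
function `α` with `Y i = X (α i)` unless `Y i = *`. -/
def StarSub {p q : ℕ} (Y : Fin p → Orient) (X : Fin q → Orient) : Prop :=
  ∃ α : Fin p → Fin q, StrictMono α ∧ ∀ i, Y i = X (α i) ∨ Y i = Orient.star

/-- The orientation string of the (pointed) cycle `f`. -/
def cycStr {m : ℕ} (f : ZMod m → Orient) : Fin m → Orient :=
  fun j => f ((j : ℕ) : ZMod m)

/-- The orientation string `σ^i(Y^k)` = `(σ^i Y)^k`: the `i`-th shift of the
`k`-fold concatenation of the string of the cycle `fY`. -/
def shiftPowStr {s : ℕ} (fY : ZMod s → Orient) (k : ℕ) (i : ZMod s) :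
    Fin (k * s) → Orient :=
  fun j => fY (i + ((j : ℕ) : ZMod s))

/-- The orientation string `σ^i(Y)^k y_{i+1}` : the `i`-th shift of the `k`-fold
concatenation of the string of `fY`, extended by its own first letter. -/
def shiftPowExtStr {s : ℕ} (fY : ZMod s → Orient) (k : ℕ) (i : ZMod s) :
    Fin (k * s + 1) → Orient :=
  fun j => fY (i + ((j : ℕ) : ZMod s))

/-- Every vertex that moves from `φ` to `ψ`, moves up. -/
def MovesUpOnly {m n : ℕ} (φ ψ : ZMod m → ZMod n) : Prop :=
  ∀ c, ψ c = φ c ∨ ψ c = φ c + 1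

/-- Every vertex that moves from `φ` to `ψ`, moves down. -/
def MovesDownOnly {m n : ℕ} (φ ψ : ZMod m → ZMod n) : Prop :=
  ∀ c, ψ c = φ c ∨ ψ c = φ c - 1

/-- `φψ` is an up edge of the Hom-graph. -/
def UpEdge {m n : ℕ} (rC : ZMod m → ZMod m → Prop) (rD : ZMod n → ZMod n → Prop)
    (φ ψ : ZMod m → ZMod n) : Prop :=
  HomEdge rC rD φ ψ ∧ MovesUpOnly φ ψ

/-- `φ` and `ψ` are joined by a path (walk) inside the induced subgraph on `S`. -/
def ConnIn {m n : ℕ} (rC : ZMod m → ZMod m → Prop) (rD : ZMod n → ZMod n → Prop)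
    (S : Set (ZMod m → ZMod n)) (φ ψ : ZMod m → ZMod n) : Prop :=
  Relation.ReflTransGen (fun a b => a ∈ S ∧ b ∈ S ∧ HomEdge rC rD a b) φ ψ

/-- `ψ` is reachable from `φ` by a path of up edges inside `S`. -/
def UpReachIn {m n : ℕ} (rC : ZMod m → ZMod m → Prop) (rD : ZMod n → ZMod n → Prop)
    (S : Set (ZMod m → ZMod n)) (φ ψ : ZMod m → ZMod n) : Prop :=
  Relation.ReflTransGen (fun a b => a ∈ S ∧ b ∈ S ∧ UpEdge rC rD a b) φ ψ

/-- One step of a path of up edges between homomorphisms. -/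
def UpStep {m n : ℕ} (rC : ZMod m → ZMod m → Prop) (rD : ZMod n → ZMod n → Prop)
    (φ ψ : ZMod m → ZMod n) : Prop :=
  IsHom rC rD φ ∧ IsHom rC rD ψ ∧ UpEdge rC rD φ ψ

/-- The set of vertices on which `φ` and `φ'` differ. -/
def Neq {α β : Type*} (φ φ' : α → β) : Set α := {g | φ g ≠ φ' g}

/-- The map `φ_T`, agreeing with `φ'` on `T` and with `φ` elsewhere. -/
noncomputable def refineMap {α β : Type*} (φ φ' : α → β) (T : Set α) : α → β :=
  fun g => if g ∈ T then φ' g else φ g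

/-- The edge `φφ'` is non-refinable: no nonempty proper subset `T` of `Neq φ φ'`
yields a homomorphism `φ_T`. -/
def NonRefinable {α β : Type*} (rG : α → α → Prop) (rH : β → β → Prop)
    (φ φ' : α → β) : Prop :=
  ¬ ∃ T : Set α, T.Nonempty ∧ T ⊂ Neq φ φ' ∧ IsHom rG rH (refineMap φ φ' T)

/-- `T` is a strong component of the digraph `r`. -/
def IsStrongComponent {α : Type*} (r : α → α → Prop) (T : Set α) : Prop :=
  T.Nonempty ∧ (∀ u ∈ T, ∀ v ∈ T, Relation.ReflTransGen r u v) ∧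
    ∀ T' : Set α, T ⊆ T' → (∀ u ∈ T', ∀ v ∈ T', Relation.ReflTransGen r u v) → T' = T

/-- `T` has no arcs out to vertices not in `T`. -/
def IsTerminal {α : Type*} (r : α → α → Prop) (T : Set α) : Prop :=
  ∀ u ∈ T, ∀ v, r u v → v ∈ T

/-- `Mon_1(C,D;i)`: monotone wind-1 homomorphisms `φ` with `φ c₀ = i`. -/
def Mon1 {m n : ℕ} (fC : ZMod m → Orient) (fD : ZMod n → Orient) (i : ZMod n) :
    Set (ZMod m → ZMod n) :=
  {φ | IsHom (cycRel fC) (cycRel fD) φ ∧ MonMap φ ∧ increase φ = (n : ℤ) ∧ φ 0 = i}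

/-- A one-step up edge: an edge from `φ` obtained by moving all the vertices of a
subpath of `C` mapped to a single vertex `d` up to `d + 1`. -/
def OneStepUp {m n : ℕ} (rC : ZMod m → ZMod m → Prop) (rD : ZMod n → ZMod n → Prop)
    (φ φ' : ZMod m → ZMod n) : Prop :=
  HomEdge rC rD φ φ' ∧
    ∃ (a : ZMod m) (k : ℕ) (d : ZMod n), k < m ∧
      (∀ j : ℕ, j ≤ k → φ (a + ((j : ℕ) : ZMod m)) = d) ∧
      ∀ c, φ' c = if ∃ j : ℕ, j ≤ k ∧ c = a + ((j : ℕ) : ZMod m) then d + 1 else φ c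

/-- The number of increasing edges of `φ` among the first `j` edges of `C`. -/
def incBefore {m n : ℕ} (φ : ZMod m → ZMod n) (j : ℕ) : ℕ :=
  ((Finset.range j).filter fun t =>
    φ (((t : ℕ) : ZMod m) + 1) = φ ((t : ℕ) : ZMod m) + 1).card

/-- One cutback-pushing step: `φ'` is obtained from `φ` by replacing the values of
`φ` on a cutback `c_a … c_{a+L}` by `φ a`. -/
def CutbackStep {m n : ℕ} (φ φ' : ZMod m → ZMod n) : Prop :=
  ∃ (a : ZMod m) (L : ℕ), L < m ∧ partialInc φ a L = 0 ∧
    (∀ j : ℕ, 0 < j → j < L → partialInc φ a j < 0) ∧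
    ∀ c, φ' c = if ∃ j : ℕ, j ≤ L ∧ c = a + ((j : ℕ) : ZMod m) then φ a else φ c

/-- `Mon_1^+(C,D;i)`: wind-1 homomorphisms whose monotone push-up is in `Mon_1(C,D;i)`. -/
def Mon1Plus {m n : ℕ} (fC : ZMod m → Orient) (fD : ZMod n → Orient) (i : ZMod n) :
    Set (ZMod m → ZMod n) :=
  {φ | IsHom (cycRel fC) (cycRel fD) φ ∧ increase φ = (n : ℤ) ∧
    ∃ ψ ∈ Mon1 fC fD i, Relation.ReflTransGen CutbackStep φ ψ}

/-! A monotone homomorphism of positive wind cannot be decreasing, so every edge of `C` is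
increasing or stationary and `φ (c_t) = i + #(increasing edges before c_t)`. As `n ≥ 3`, the
homomorphism condition only constrains the increasing edges: the `j`-th one is sent onto the
edge `(i + j)(i + j + 1)` of `D`, whose letter must be the letter of that edge of `C` or `*`.
So the positions of the increasing edges, in order, form a selection function for
`σ^i(D^w) ≤* C`; conversely a selection function defines `φ` by counting selected positions,
and there are `w n` of them exactly when `φ` has wind `w`. -/

open Finset Function

section ZModCycle

variable {n : ℕ}

lemma add_one_ne_self_of_two_le (hn : 2 ≤ n) (x : ZMod n) : x + 1 ≠ x := by
  have : Fact (1 < n) := ⟨hn⟩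
  simp

lemma self_ne_add_one_add_one_of_three_le (hn : 3 ≤ n) (x : ZMod n) : x ≠ x + 1 + 1 := by
  have h2 : (2 : ZMod n) ≠ 0 := by
    exact_mod_cast (ZMod.natCast_eq_zero_iff 2 n).not.mpr (Nat.not_dvd_of_pos_of_lt two_pos hn)
  rw [add_assoc, one_add_one_eq_two]
  exact fun h => h2 (left_eq_add.mp h)

lemma Orient.eq_or_eq_star_iff {x y : Orient} :
    y = x ∨ y = .star ↔ (x.fwd → y.fwd) ∧ (x.bwd → y.bwd) := by
  cases x <;> cases y <;> simp [Orient.fwd, Orient.bwd]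

lemma cycRel_add_one_iff (hn : 3 ≤ n) (f : ZMod n → Orient) (x : ZMod n) :
    cycRel f x (x + 1) ↔ (f x).fwd := by
  simp [cycRel, (add_one_ne_self_of_two_le (by omega) x).symm,
    self_ne_add_one_add_one_of_three_le hn x]

lemma cycRel_add_one_left_iff (hn : 3 ≤ n) (f : ZMod n → Orient) (x : ZMod n) :
    cycRel f (x + 1) x ↔ (f x).bwd := by
  simp [cycRel, add_one_ne_self_of_two_le (by omega) x,
    self_ne_add_one_add_one_of_three_le hn x]

end ZModCycle

variable {m n : ℕ}

def IsIncEdge (φ : ZMod m → ZMod n) (c : ZMod m) : Prop :=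
  φ (c + 1) = φ c + 1

def IsWeaklyInc (φ : ZMod m → ZMod n) : Prop :=
  ∀ c, IsIncEdge φ c ∨ φ (c + 1) = φ c

theorem isHom_cycRel_iff (hn : 3 ≤ n) {fC : ZMod m → Orient} {fD : ZMod n → Orient}
    {φ : ZMod m → ZMod n} (hφ : IsWeaklyInc φ) :
    IsHom (cycRel fC) (cycRel fD) φ ↔
      ∀ c, IsIncEdge φ c → fD (φ c) = fC c ∨ fD (φ c) = .star := by
  constructor
  · intro hhom c hc
    refine Orient.eq_or_eq_star_iff.mpr ⟨fun hf => ?_, fun hb => ?_⟩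
    · have := hhom c (c + 1) (Or.inr (Or.inl ⟨rfl, hf⟩))
      rwa [hc, cycRel_add_one_iff hn] at this
    · have := hhom (c + 1) c (Or.inr (Or.inr ⟨rfl, hb⟩))
      rwa [hc, cycRel_add_one_left_iff hn] at this
  · rintro hloc u v (rfl | ⟨rfl, hf⟩ | ⟨rfl, hb⟩)
    · exact Or.inl rfl
    · rcases hφ u with hu | hu
      · rw [hu, cycRel_add_one_iff hn]
        exact (Orient.eq_or_eq_star_iff.mp (hloc u hu)).1 hf
      · exact Or.inl hu.symm
    · rcases hφ v with hv | hv
      · rw [hv, cycRel_add_one_left_iff hn]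
        exact (Orient.eq_or_eq_star_iff.mp (hloc v hv)).2 hb
      · exact Or.inl hv

lemma edgeVal_of_isWeaklyInc (hn : 2 ≤ n) {φ : ZMod m → ZMod n} (hφ : IsWeaklyInc φ)
    (c : ZMod m) : edgeVal φ c = if IsIncEdge φ c then 1 else 0 := by
  rcases hφ c with hc | hc
  · simp only [IsIncEdge] at hc
    simp [edgeVal, IsIncEdge, hc]
  · have h1 := add_one_ne_self_of_two_le hn (φ c)
    have h2 : φ c ≠ φ c - 1 := fun h => h1 (eq_sub_iff_add_eq.mp h)
    simp [edgeVal, IsIncEdge, hc, h1.symm, h2]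

lemma increase_eq_count (hn : 2 ≤ n) {φ : ZMod m → ZMod n} (hφ : IsWeaklyInc φ) :
    increase φ = Nat.count (fun t : ℕ => IsIncEdge φ t) m := by
  rw [increase, Nat.count_eq_card_filter_range, ← sum_boole]
  exact sum_congr rfl fun t _ => edgeVal_of_isWeaklyInc hn hφ t

lemma increase_of_decMap (hn : 3 ≤ n) {φ : ZMod m → ZMod n} (hφ : DecMap φ) :
    increase φ = -m := by
  have hne : ∀ x : ZMod n, x - 1 ≠ x + 1 := fun x h =>
    self_ne_add_one_add_one_of_three_le hn x (by rw [← h]; ring)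
  simp only [DecMap] at hφ
  simp [increase, edgeVal, hφ, hne]

lemma isWeaklyInc_of_monMap (hn : 3 ≤ n) {φ : ZMod m → ZMod n} (hφ : MonMap φ)
    (hpos : 0 < increase φ) : IsWeaklyInc φ := by
  rcases hφ with hinc | hdec
  · exact hinc.1
  · rw [increase_of_decMap hn hdec] at hpos
    omega

lemma apply_natCast_eq_add_count {φ : ZMod m → ZMod n} (hφ : IsWeaklyInc φ) (t : ℕ) :
    φ t = φ 0 + Nat.count (fun t : ℕ => IsIncEdge φ t) t := by
  induction t with
  | zero => simp
  | succ t ih =>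
    rw [Nat.count_succ, Nat.cast_succ]
    by_cases ht : IsIncEdge φ t
    · rw [ht, ih, if_pos ht]
      push_cast
      ring
    · rw [(hφ t).resolve_left ht, ih, if_neg ht, add_zero]

lemma exists_strictMono_of_count_eq (p : ℕ → Prop) [DecidablePred p] {m k : ℕ}
    (h : Nat.count p m = k) :
    ∃ α : Fin k → Fin m, StrictMono α ∧ ∀ j, p (α j) ∧ Nat.count p (α j) = j := by
  subst h
  have hcard : ∀ j : Fin (Nat.count p m), ∀ hf : (Set.ofPred p).Finite, (j : ℕ) < #hf.toFinset :=
    fun j hf => j.2.trans_le (Nat.count_le_card hf m)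
  refine ⟨fun j => ⟨Nat.nth p j, Nat.nth_lt_of_lt_count j.2⟩, fun a b hab => ?_,
    fun j => ⟨Nat.nth_mem _ (hcard j), Nat.count_nth (hcard j)⟩⟩
  exact Nat.nth_lt_nth' hab (hcard b)

theorem starSub_of_isWeaklyInc (hn : 3 ≤ n) {fC : ZMod m → Orient} {fD : ZMod n → Orient}
    {φ : ZMod m → ZMod n} (hφ : IsWeaklyInc φ) (hhom : IsHom (cycRel fC) (cycRel fD) φ) {k : ℕ}
    (hk : Nat.count (fun t : ℕ => IsIncEdge φ t) m = k) :
    StarSub (fun j : Fin k => fD (φ 0 + (j : ℕ))) (cycStr fC) := by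
  obtain ⟨α, hα, hαinc⟩ := exists_strictMono_of_count_eq _ hk
  refine ⟨α, hα, fun j => ?_⟩
  have hval : φ ((α j : ℕ) : ZMod m) = φ 0 + (j : ℕ) := by
    rw [apply_natCast_eq_add_count hφ, (hαinc j).2]
  dsimp only
  rw [← hval]
  exact (isHom_cycRel_iff hn hφ).mp hhom _ (hαinc j).1

section Range

variable {k : ℕ} {a : Fin k → ℕ}

lemma count_mem_range_eq_card (ha : Injective a) (t : ℕ) :
    Nat.count (· ∈ Set.range a) t = #{j | a j < t} := by
  rw [Nat.count_eq_card_filter_range, ← card_image_of_injective _ ha]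
  congr 1
  ext x
  simp only [mem_filter, mem_range, Set.mem_range, mem_image, mem_univ, true_and]
  constructor
  · rintro ⟨hx, j, rfl⟩
    exact ⟨j, hx, rfl⟩
  · rintro ⟨j, hj, rfl⟩
    exact ⟨hj, j, rfl⟩

lemma count_mem_range_apply (ha : StrictMono a) (j : Fin k) :
    Nat.count (· ∈ Set.range a) (a j) = j := by
  rw [count_mem_range_eq_card ha.injective]
  simp [ha.lt_iff_lt, filter_gt_eq_Iio]

lemma count_mem_range_of_forall_lt (ha : Injective a) (h : ∀ j, a j < m) :
    Nat.count (· ∈ Set.range a) m = k := by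
  rw [count_mem_range_eq_card ha]
  simp [h]

end Range

lemma apply_val_add_one [NeZero m] {β : Type*} {ψ : ℕ → β} (h : ψ m = ψ 0) (c : ZMod m) :
    ψ (c + 1).val = ψ (c.val + 1) := by
  have hc : c + 1 = ((c.val + 1 : ℕ) : ZMod m) := by push_cast; rw [ZMod.natCast_zmod_val]
  rw [hc, ZMod.val_natCast]
  rcases (show c.val + 1 ≤ m from c.val_lt).lt_or_eq with hlt | heq
  · rw [Nat.mod_eq_of_lt hlt]
  · rw [heq, Nat.mod_self, h]

lemma natCast_count_val_add_one [NeZero m] {p : ℕ → Prop} [DecidablePred p]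
    (hp : (Nat.count p m : ZMod n) = 0) (c : ZMod m) :
    (Nat.count p (c + 1).val : ZMod n) = Nat.count p c.val + if p c.val then 1 else 0 := by
  rw [apply_val_add_one (ψ := fun t => (Nat.count p t : ZMod n)) (by simp [hp]) c,
    Nat.count_succ]
  push_cast
  rfl

theorem exists_isWeaklyInc_of_starSub [NeZero m] (hn : 3 ≤ n) {fC : ZMod m → Orient}
    {fD : ZMod n → Orient} {k : ℕ} (hk : (k : ZMod n) = 0) {i : ZMod n}
    (h : StarSub (fun j : Fin k => fD (i + (j : ℕ))) (cycStr fC)) :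
    ∃ φ : ZMod m → ZMod n, IsWeaklyInc φ ∧ IsHom (cycRel fC) (cycRel fD) φ ∧
      Nat.count (fun t : ℕ => IsIncEdge φ t) m = k ∧ φ 0 = i := by
  obtain ⟨α, hα, hsel⟩ := h
  set a : Fin k → ℕ := fun j => α j
  have ha : StrictMono a := Fin.val_strictMono.comp hα
  set p : ℕ → Prop := (· ∈ Set.range a)
  have hpm : Nat.count p m = k := count_mem_range_of_forall_lt ha.injective fun j => (α j).2
  -- `φ c` counts the selected positions below `c`; it closes up around `C` because `n ∣ k`.
  set φ : ZMod m → ZMod n := fun c => i + Nat.count p c.val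
  have hstep : ∀ c, φ (c + 1) = φ c + if p c.val then 1 else 0 := fun c => by
    simp only [φ]
    rw [natCast_count_val_add_one (by rw [hpm, hk]) c, add_assoc]
  have hinc : ∀ c, IsIncEdge φ c ↔ p c.val := by
    intro c
    rw [IsIncEdge, hstep]
    split_ifs with hc
    · simp [hc]
    · simp [hc, (add_one_ne_self_of_two_le (by omega) (φ c)).symm]
  have hφ : IsWeaklyInc φ := fun c => by
    by_cases hc : p c.val
    · exact Or.inl ((hinc c).mpr hc)
    · exact Or.inr (by rw [hstep, if_neg hc, add_zero])
  refine ⟨φ, hφ, (isHom_cycRel_iff hn hφ).mpr fun c hc => ?_, ?_, by simp [φ]⟩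
  · obtain ⟨j, hj⟩ := (hinc c).mp hc
    have hφc : φ c = i + (j : ℕ) := by
      simp only [φ, ← hj]
      rw [count_mem_range_apply ha]
    have hc' : ((α j : ℕ) : ZMod m) = c := by
      simp only [a] at hj
      rw [hj, ZMod.natCast_zmod_val]
    rw [hφc, ← hc']
    exact hsel j
  · rw [← hpm, Nat.count_eq_card_filter_range, Nat.count_eq_card_filter_range]
    congr 1
    refine filter_congr fun t ht => ?_
    rw [hinc, ZMod.val_natCast_of_lt (mem_range.mp ht)]

lemma monMap_and_hasWind_iff (hn : 3 ≤ n) {w : ℕ} (hw : 1 ≤ w) {φ : ZMod m → ZMod n} :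
    MonMap φ ∧ HasWind φ w ↔
      IsWeaklyInc φ ∧ Nat.count (fun t : ℕ => IsIncEdge φ t) m = w * n := by
  have hwn : 0 < w * n := by positivity
  constructor
  · rintro ⟨hmon, hwind⟩
    have hφ := isWeaklyInc_of_monMap hn hmon (by rw [hwind]; positivity)
    refine ⟨hφ, ?_⟩
    have := (increase_eq_count (by omega) hφ).symm.trans hwind
    exact_mod_cast this
  · rintro ⟨hφ, hcount⟩
    obtain ⟨t, -, ht⟩ := Nat.count_ne_iff_exists.mp (hcount ▸ hwn.ne')
    refine ⟨Or.inl ⟨hφ, t, ht⟩, ?_⟩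
    rw [HasWind, increase_eq_count (by omega) hφ, hcount]
    push_cast
    rfl

theorem monotone_wind_w_iff_star_substring_general (m n : ℕ) (hn : 3 ≤ n)
    (fC : ZMod m → Orient) (fD : ZMod n → Orient) (w : ℕ) (hw : 1 ≤ w) (i : ZMod n) :
    (∃ φ : ZMod m → ZMod n, IsHom (cycRel fC) (cycRel fD) φ ∧ MonMap φ ∧
        HasWind φ (w : ℤ) ∧ φ 0 = i) ↔
      StarSub (shiftPowStr fD w i) (cycStr fC) := by
  constructor
  · rintro ⟨φ, hhom, hmon, hwind, rfl⟩
    obtain ⟨hφ, hcount⟩ := (monMap_and_hasWind_iff hn hw).mp ⟨hmon, hwind⟩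
    exact starSub_of_isWeaklyInc hn hφ hhom hcount
  · intro h
    have : NeZero m := NeZero.of_pos (h.choose ⟨0, by positivity⟩).pos
    obtain ⟨φ, hφ, hhom, hcount, hφ0⟩ := exists_isWeaklyInc_of_starSub hn (by simp) h
    obtain ⟨hmon, hwind⟩ := (monMap_and_hasWind_iff hn hw).mpr ⟨hφ, hcount⟩
    exact ⟨φ, hhom, hmon, hwind, hφ0⟩

/-- For digraph cycles `C`, `D`, an integer `w ≥ 1` and a vertex `i` of
`D`, there is a wind-`w` monotone homomorphism `φ : C → D` with `φ c₀ = i` iff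
`σ^i(D^w) ≤* C`. -/
theorem monotone_wind_w_iff_star_substring (m n : ℕ) (hm : 3 ≤ m) (hn : 3 ≤ n)
    (fC : ZMod m → Orient) (fD : ZMod n → Orient) (w : ℕ) (hw : 1 ≤ w) (i : ZMod n) :
    (∃ φ : ZMod m → ZMod n, IsHom (cycRel fC) (cycRel fD) φ ∧ MonMap φ ∧
        HasWind φ (w : ℤ) ∧ φ 0 = i) ↔
      StarSub (shiftPowStr fD w i) (cycStr fC) :=
  monotone_wind_w_iff_star_substring_general m n hn fC fD w hw i

end Recon
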